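/- arXiv:1502.06793 — 4 statements merged into one kernel-verified Lean document; each statement's English description precedes it below -/
import Mathlib

section
/- Let σ > 0, let v : ℝ³ → ℝ³ be a continuously differentiable vector field, let T > 0, and let s : [0,T] → ℝ³ be continuously differentiable. Define the Onsager–Machlup functionals L(x,y) = ‖y − v(x)‖²/(2σ²) + (1/2)(div v)(x) and L'(x,y) = ‖y + v(x)‖²/(2σ²) − (1/2)(div v)(x) (the functional for the negated drift field −v), and the reversed path s'(t) = s(T − t). Then ∫₀ᵀ L'(s'(t), (d/dt)s'(t)) dt = ∫₀ᵀ L(s(t), (d/dt)s(t)) dt − ∫₀ᵀ (div v)(s(t)) dt; in particular the two actions differ exactly by the integral of the divergence of v along the path. -/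
open MeasureTheory intervalIntegral

noncomputable section

/-- The spatial state space `ℝ³`. -/
abbrev E3 : Type := EuclideanSpace ℝ (Fin 3)

/-- The divergence `div v = ∑ⱼ ∂vⱼ/∂xⱼ` of a vector field `v : ℝ³ → ℝ³`. -/
def div3 (v : E3 → E3) (x : E3) : ℝ :=
  ∑ j : Fin 3, fderiv ℝ v x (EuclideanSpace.single j 1) j

/-- The (correct) Onsager–Machlup functional of a Wiener process with drift `v` and
noise strength `σ`: `L(x,y) = ‖y - v(x)‖²/(2σ²) + (1/2)(div v)(x)`. -/
def OMLagrangian (σ : ℝ) (v : E3 → E3) (x y : E3) : ℝ :=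
  ‖y - v x‖ ^ 2 / (2 * σ ^ 2) + (1 / 2) * div3 v x

/-!
Replacing the drift `v` by `-v` and the velocity `y` by `-y` leaves `‖y - v x‖²` unchanged and
flips the sign of the divergence term, so the reversed Lagrangian at time `t` equals
`L(s(T-t), ṡ(T-t)) - div v (s(T-t))`. The substitution `t ↦ T - t` turns its integral into the
forward action minus the integral of `div v` along the path.
-/

lemma div3_neg (v : E3 → E3) (x : E3) : div3 (fun x => -v x) x = -div3 v x := by
  simp only [div3, fderiv_fun_neg, neg_apply, PiLp.neg_apply, Finset.sum_neg_distrib]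

lemma OMLagrangian_neg_neg (σ : ℝ) (v : E3 → E3) (x y : E3) :
    OMLagrangian σ (fun x => -v x) x (-y) = OMLagrangian σ v x y - div3 v x := by
  rw [OMLagrangian, OMLagrangian, div3_neg, ← neg_sub', norm_neg]
  ring

lemma continuous_div3 {v : E3 → E3} (hv : ContDiff ℝ 1 v) : Continuous (div3 v) := by
  have := hv.continuous_fderiv one_ne_zero
  unfold div3
  fun_prop

lemma continuous_uncurry_OMLagrangian (σ : ℝ) {v : E3 → E3} (hv : ContDiff ℝ 1 v) :
    Continuous (Function.uncurry (OMLagrangian σ v)) := by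
  have := continuous_div3 hv
  have := hv.continuous
  unfold Function.uncurry OMLagrangian
  fun_prop

/-- On the interior `deriv s` agrees with the one-sided derivative on `[a, b]`, which is
continuous up to the endpoints. -/
theorem ContDiffOn.intervalIntegrable_comp_deriv {E F : Type*} [NormedAddCommGroup E]
    [NormedSpace ℝ E] [NormedAddCommGroup F] {s : ℝ → E} {a b : ℝ}
    (hs : ContDiffOn ℝ 1 s (Set.Icc a b)) {Φ : E → E → F}
    (hΦ : Continuous (Function.uncurry Φ)) (hab : a < b) :
    IntervalIntegrable (fun t => Φ (s t) (deriv s t)) volume a b := by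
  have hcont : ContinuousOn (fun t => Φ (s t) (derivWithin s (Set.Icc a b) t)) (Set.Icc a b) :=
    hΦ.comp_continuousOn (f := fun t => (s t, derivWithin s (Set.Icc a b) t))
      (hs.continuousOn.prodMk (hs.continuousOn_derivWithin (uniqueDiffOn_Icc hab) le_rfl))
  refine (hcont.intervalIntegrable_of_Icc hab.le).congr_uIoo fun t ht => ?_
  rw [Set.uIoo_of_le hab.le] at ht
  simp only [derivWithin_of_mem_nhds (Icc_mem_nhds ht.1 ht.2)]

theorem OM_action_reversal_divergence_general
    (σ : ℝ) (v : E3 → E3) (hv : ContDiff ℝ 1 v)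
    (T : ℝ) (hT : 0 < T) (s : ℝ → E3) (hs : ContDiffOn ℝ 1 s (Set.Icc 0 T)) :
    (∫ t in (0:ℝ)..T,
        OMLagrangian σ (fun x => -v x) (s (T - t)) (deriv (fun u => s (T - u)) t)) =
    (∫ t in (0:ℝ)..T, OMLagrangian σ v (s t) (deriv s t)) -
      ∫ t in (0:ℝ)..T, div3 v (s t) := by
  -- `deriv_comp_const_sub` needs no differentiability: `u ↦ T - u` is a diffeomorphism.
  simp only [deriv_comp_const_sub, OMLagrangian_neg_neg]
  rw [integral_comp_sub_left (fun t => OMLagrangian σ v (s t) (deriv s t) - div3 v (s t)) T,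
    sub_self, sub_zero]
  exact integral_sub
    (hs.intervalIntegrable_comp_deriv (continuous_uncurry_OMLagrangian σ hv) hT)
    (hs.intervalIntegrable_comp_deriv (Φ := fun x _ => div3 v x)
      ((continuous_div3 hv).comp continuous_fst) hT)

/-- **Irreversibility of the Onsager–Machlup action.**
For a continuously differentiable drift field `v` and a continuously differentiable path
`s : [0,T] → ℝ³`, the action of the reversed path `s'(t) = s(T-t)` under the Lagrangian
`L'` of the negated drift field `-v` equals the action of `s` under `L` minus the
integral of the divergence of `v` along the path. -/
theorem OM_action_reversal_divergence
    (σ : ℝ) (hσ : 0 < σ) (v : E3 → E3) (hv : ContDiff ℝ 1 v)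
    (T : ℝ) (hT : 0 < T) (s : ℝ → E3) (hs : ContDiffOn ℝ 1 s (Set.Icc 0 T)) :
    (∫ t in (0:ℝ)..T,
        OMLagrangian σ (fun x => -v x) (s (T - t)) (deriv (fun u => s (T - u)) t)) =
    (∫ t in (0:ℝ)..T, OMLagrangian σ v (s t) (deriv s t)) -
      ∫ t in (0:ℝ)..T, div3 v (s t) :=
  OM_action_reversal_divergence_general σ v hv T hT s hs
end
end

section
/- Let v : ℝ³ → ℝ³ be a continuously differentiable vector field and let p, q : ℝ³ → ℝ be continuously differentiable with compact support. Then ∫_{ℝ³} q(x) ( v(x)·∇p(x) + div(v p)(x) ) dx = − ∫_{ℝ³} p(x) ( v(x)·∇q(x) + div(v q)(x) ) dx; i.e., the convection operator p ↦ v·∇p + div(vp) is antisymmetric with respect to the L² inner product on compactly supported functions. -/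
/-!
The Leibniz rule `div (f v) = v·∇f + f div v` gives, pointwise,
`q (v·∇p + div(vp)) + p (v·∇q + div(vq)) = 2 div (p q v)`, and the integral of the
divergence of a compactly supported `C¹` field vanishes: integrate each `∂ⱼ` by parts
against the constant `1`.
-/

open MeasureTheory

noncomputable section

/-- The `j`-th partial derivative of a scalar function on `ℝ³`. -/
def pd (j : Fin 3) (p : E3 → ℝ) (x : E3) : ℝ :=
  fderiv ℝ p x (EuclideanSpace.single j 1)

/-- The convection operator `p ↦ v·∇p + div(vp)`. -/
def convOp (v : E3 → E3) (p : E3 → ℝ) (x : E3) : ℝ :=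
  (∑ j : Fin 3, v x j * pd j p x) + div3 (fun y => p y • v y) x

section IntegralFderiv

variable {E F : Type*} [NormedAddCommGroup E] [NormedSpace ℝ E] [FiniteDimensional ℝ E]
  [MeasurableSpace E] [BorelSpace E] {μ : Measure E} [μ.IsAddHaarMeasure]
  [NormedAddCommGroup F] [NormedSpace ℝ F]

theorem integral_fderiv_apply_eq_zero {g : E → F} (hg : ContDiff ℝ 1 g)
    (hgc : HasCompactSupport g) (u : E) : ∫ x, fderiv ℝ g x u ∂μ = 0 := by
  have hg' : Continuous fun x => fderiv ℝ g x u :=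
    (hg.continuous_fderiv one_ne_zero).clm_apply continuous_const
  simpa using integral_smul_fderiv_eq_neg_fderiv_smul_of_integrable (μ := μ)
    (f := fun _ => (1 : ℝ)) (g := g) (v := u) (by simp)
    (by simpa using hg'.integrable_of_hasCompactSupport (hgc.fderiv_apply ℝ u))
    (by simpa using hg.continuous.integrable_of_hasCompactSupport hgc)
    (fun x _ => differentiableAt_const _) (fun x _ => hg.differentiable one_ne_zero x)

end IntegralFderiv

section Convection

variable {v w : E3 → E3} {p q : E3 → ℝ} {x : E3}

theorem continuous_pd (j : Fin 3) (hp : ContDiff ℝ 1 p) : Continuous (pd j p) :=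
  (hp.continuous_fderiv one_ne_zero).clm_apply continuous_const

theorem continuous_div3_s3 (hw : ContDiff ℝ 1 w) : Continuous (div3 w) :=
  continuous_finsetSum _ fun j _ => (PiLp.continuous_apply 2 _ j).comp
    ((hw.continuous_fderiv one_ne_zero).clm_apply continuous_const)

theorem continuous_convOp (hv : ContDiff ℝ 1 v) (hp : ContDiff ℝ 1 p) :
    Continuous (convOp v p) :=
  (continuous_finsetSum _ fun j _ =>
    ((PiLp.continuous_apply 2 _ j).comp hv.continuous).mul (continuous_pd j hp)).add
    (continuous_div3_s3 (hp.smul hv))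

theorem support_convOp_subset (v : E3 → E3) (p : E3 → ℝ) :
    Function.support (convOp v p) ⊆ tsupport p := by
  intro x hx
  by_contra hxp
  have hp : fderiv ℝ p x = 0 :=
    Function.notMem_support.1 fun h => hxp (support_fderiv_subset ℝ h)
  have hpv : fderiv ℝ (fun y => p y • v y) x = 0 :=
    Function.notMem_support.1 fun h =>
      hxp (tsupport_smul_subset_left p v (support_fderiv_subset ℝ h))
  exact hx (by simp [convOp, pd, div3, hp, hpv])

theorem HasCompactSupport.convOp (v : E3 → E3) (hpc : HasCompactSupport p) :
    HasCompactSupport (convOp v p) :=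
  hpc.mono' (support_convOp_subset v p)

theorem pd_mul (j : Fin 3) (hp : DifferentiableAt ℝ p x) (hq : DifferentiableAt ℝ q x) :
    pd j (fun y => p y * q y) x = pd j p x * q x + p x * pd j q x := by
  simp only [pd, fderiv_fun_mul hp hq, add_apply, smul_apply, smul_eq_mul]
  ring

theorem div3_smul (hp : DifferentiableAt ℝ p x) (hv : DifferentiableAt ℝ v x) :
    div3 (fun y => p y • v y) x = (∑ j : Fin 3, v x j * pd j p x) + p x * div3 v x := by
  simp only [div3, pd, Finset.mul_sum, ← Finset.sum_add_distrib, fderiv_fun_smul hp hv]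
  refine Finset.sum_congr rfl fun j _ => ?_
  simp only [add_apply, smul_apply, ContinuousLinearMap.smulRight_apply, PiLp.add_apply,
    PiLp.smul_apply, smul_eq_mul]
  ring

theorem mul_convOp_add_mul_convOp (hv : DifferentiableAt ℝ v x)
    (hp : DifferentiableAt ℝ p x) (hq : DifferentiableAt ℝ q x) :
    q x * convOp v p x + p x * convOp v q x = 2 * div3 (fun y => (p y * q y) • v y) x := by
  rw [div3_smul (p := fun y => p y * q y) (hp.mul hq) hv, convOp, convOp, div3_smul hp hv,
    div3_smul hq hv]
  simp only [pd_mul _ hp hq, Fin.sum_univ_three]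
  ring

theorem integral_div3_eq_zero (hw : ContDiff ℝ 1 w) (hwc : HasCompactSupport w) :
    ∫ x, div3 w x = 0 := by
  have hint (j : Fin 3) : Integrable fun x => fderiv ℝ w x (EuclideanSpace.single j 1) :=
    ((hw.continuous_fderiv one_ne_zero).clm_apply continuous_const).integrable_of_hasCompactSupport
      (hwc.fderiv_apply ℝ _)
  have hint_apply (j : Fin 3) :
      Integrable fun x => fderiv ℝ w x (EuclideanSpace.single j 1) j :=
    (EuclideanSpace.proj (𝕜 := ℝ) j).integrable_comp (hint j)
  simp only [div3]
  rw [integral_finsetSum _ fun j _ => hint_apply j]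
  refine Finset.sum_eq_zero fun j _ => ?_
  calc ∫ x, fderiv ℝ w x (EuclideanSpace.single j 1) j
      = EuclideanSpace.proj (𝕜 := ℝ) j (∫ x, fderiv ℝ w x (EuclideanSpace.single j 1)) :=
        (EuclideanSpace.proj j).integral_comp_comm (hint j)
    _ = 0 := by rw [integral_fderiv_apply_eq_zero hw hwc, map_zero]

end Convection

theorem convection_antisymmetric_general
    (v : E3 → E3) (hv : ContDiff ℝ 1 v)
    (p q : E3 → ℝ) (hp : ContDiff ℝ 1 p) (hq : ContDiff ℝ 1 q)
    (hpc : HasCompactSupport p) :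
    (∫ x : E3, q x * convOp v p x) = -∫ x : E3, p x * convOp v q x := by
  have hqp : Integrable fun x => q x * convOp v p x :=
    (hq.continuous.mul (continuous_convOp hv hp)).integrable_of_hasCompactSupport
      (hpc.convOp v).mul_left
  have hpq : Integrable fun x => p x * convOp v q x :=
    (hp.continuous.mul (continuous_convOp hv hq)).integrable_of_hasCompactSupport hpc.mul_right
  refine eq_neg_of_add_eq_zero_left ?_
  calc (∫ x, q x * convOp v p x) + ∫ x, p x * convOp v q x
      = ∫ x, 2 * div3 (fun y => (p y * q y) • v y) x := by
        rw [← integral_add hqp hpq]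
        congr with x
        exact mul_convOp_add_mul_convOp (hv.differentiable one_ne_zero x)
          (hp.differentiable one_ne_zero x) (hq.differentiable one_ne_zero x)
    _ = 0 := by
        rw [integral_const_mul, integral_div3_eq_zero (w := fun y => (p y * q y) • v y)
          ((hp.mul hq).smul hv) hpc.mul_right.smul_right, mul_zero]

/-- **Antisymmetry of the convection operator.**
For a `C¹` vector field `v` and compactly supported `C¹` functions `p, q` on `ℝ³`,
`∫ q (v·∇p + div(vp)) = -∫ p (v·∇q + div(vq))`; i.e. the convection operator is
antisymmetric with respect to the `L²` inner product. -/
theorem convection_antisymmetric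
    (v : E3 → E3) (hv : ContDiff ℝ 1 v)
    (p q : E3 → ℝ) (hp : ContDiff ℝ 1 p) (hq : ContDiff ℝ 1 q)
    (hpc : HasCompactSupport p) (hqc : HasCompactSupport q) :
    (∫ x : E3, q x * convOp v p x) = -∫ x : E3, p x * convOp v q x :=
  convection_antisymmetric_general v hv p q hp hq hpc
end
end

section
/- Let E be a real Banach space, A : E → E a continuous linear operator, κ ∈ ℝ, and f : [0,∞) → E differentiable with f′(t) = A f(t) for all t ≥ 0. Assume that T ↦ e^{κT} f(T) is Bochner integrable on [0,∞) and e^{κT} f(T) → 0 as T → ∞. Then (A + κ·Id)( ∫₀^∞ e^{κT} f(T) dT ) = −f(0); i.e., exponential reweighting of the propagator by e^{κT} corresponds to the spectral shift A ↦ A + κ of the generator. -/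
/-!
Multiplying a solution of `f' = A f` by `e^{κT}` gives a solution `g` of `g' = (A + κ) g`.
For any such `g` that is integrable on `[0, ∞)` and vanishes at infinity, the fundamental
theorem of calculus gives `∫₀^∞ (A + κ) g = g(∞) - g(0) = -g(0)`, and the continuous linear
map `A + κ` commutes with the Bochner integral.
-/

open MeasureTheory Filter Set

theorem HasDerivWithinAt.exp_mul_smul_of_linear {E : Type*} [NormedAddCommGroup E]
    [NormedSpace ℝ E] {A : E →L[ℝ] E} {f : ℝ → E} {s : Set ℝ} {t : ℝ} (κ : ℝ)
    (hf : HasDerivWithinAt f (A (f t)) s t) :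
    HasDerivWithinAt (fun T => Real.exp (κ * T) • f T)
      ((A + κ • (1 : E →L[ℝ] E)) (Real.exp (κ * t) • f t)) s t := by
  have hexp : HasDerivWithinAt (fun T => Real.exp (κ * T)) (Real.exp (κ * t) * κ) s t :=
    ((hasDerivAt_id t).const_mul κ).exp.hasDerivWithinAt.congr_deriv (by simp)
  refine (hexp.smul hf).congr_deriv ?_
  rw [add_apply, smul_apply, one_apply_eq_self, map_smul, smul_smul,
    mul_comm κ (Real.exp _)]

theorem ContinuousLinearMap.map_integral_Ioi_eq_neg_of_hasDerivWithinAt {E : Type*}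
    [NormedAddCommGroup E] [NormedSpace ℝ E] [CompleteSpace E] (B : E →L[ℝ] E) {g : ℝ → E}
    {a : ℝ} (hg : ∀ t ∈ Ici a, HasDerivWithinAt g (B (g t)) (Ici a) t)
    (hint : IntegrableOn g (Ioi a)) (hlim : Tendsto g atTop (nhds 0)) :
    B (∫ t in Ioi a, g t) = -g a := by
  rw [← B.integral_comp_comm hint, ← zero_sub]
  exact integral_Ioi_of_hasDerivAt_of_tendsto (hg a self_mem_Ici).continuousWithinAt
    (fun t ht => (hg t (mem_Ici.2 ht.le)).hasDerivAt (Ici_mem_nhds ht))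
    (B.integrable_comp hint) hlim

/-- **Exponential reweighting corresponds to a spectral shift of the generator.**
Let `E` be a real Banach space, `A : E → E` a continuous linear operator, `κ ∈ ℝ`,
and `f : [0,∞) → E` differentiable with `f' = A f` on `[0,∞)`. If `T ↦ e^{κT} f(T)`
is Bochner integrable on `[0,∞)` and `e^{κT} f(T) → 0` as `T → ∞`, then
`(A + κ·Id)(∫₀^∞ e^{κT} f(T) dT) = -f(0)`. -/
theorem exponential_reweighting_spectral_shift
    {E : Type*} [NormedAddCommGroup E] [NormedSpace ℝ E] [CompleteSpace E]
    (A : E →L[ℝ] E) (κ : ℝ) (f : ℝ → E)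
    (hf : ∀ t ∈ Set.Ici (0 : ℝ), HasDerivWithinAt f (A (f t)) (Set.Ici 0) t)
    (hint : IntegrableOn (fun T => Real.exp (κ * T) • f T) (Set.Ici 0))
    (hlim : Tendsto (fun T => Real.exp (κ * T) • f T) atTop (nhds 0)) :
    (A + κ • (1 : E →L[ℝ] E))
        (∫ T in Set.Ici (0 : ℝ), Real.exp (κ * T) • f T) = -f 0 := by
  rw [integral_Ici_eq_integral_Ioi,
    (A + κ • (1 : E →L[ℝ] E)).map_integral_Ioi_eq_neg_of_hasDerivWithinAt
      (fun t ht => (hf t ht).exp_mul_smul_of_linear κ) (hint.mono_set Ioi_subset_Ici_self) hlim]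
  simp
end

section
/- Let E be a real Hilbert space, H : E → E an invertible continuous linear operator, and Z : E → E a continuous linear operator with Z ∘ Z = Id, Z† = Z, and H ∘ Z = Z ∘ H†. Then the operator Z ∘ H⁻¹ is self-adjoint; consequently the connectivity measure c(a,b) = −⟨a, Z H⁻¹ b⟩ is symmetric: c(a,b) = c(b,a) for all a, b ∈ E. -/
/-!
The argument is purely algebraic in the star monoid of operators. Since `Z` intertwines `H`
with `H†`, it intertwines a left inverse `G` of `H` with `G†`: `Z G† = G Z`. As `Z` is its own
inverse, this reads `G† Z = Z G`, i.e. `(Z G)† = Z G`.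
-/

open ContinuousLinearMap

theorem mul_eq_mul_of_mul_eq_mul_of_mul_eq_one {M : Type*} [Monoid M] {G H K L Z : M}
    (hGH : G * H = 1) (hKL : K * L = 1) (hHZ : H * Z = Z * K) : Z * L = G * Z :=
  calc Z * L = G * (H * Z) * L := by rw [← mul_assoc G, hGH, one_mul]
    _ = G * Z * (K * L) := by rw [hHZ]; simp only [mul_assoc]
    _ = G * Z := by rw [hKL, mul_one]

theorem IsSelfAdjoint.mul_of_mul_eq_mul_star {R : Type*} [Monoid R] [StarMul R] {H G Z : R}
    (hGH : G * H = 1) (hZZ : Z * Z = 1) (hZ : IsSelfAdjoint Z) (hHZ : H * Z = Z * star H) :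
    IsSelfAdjoint (Z * G) := by
  have hstar : star H * star G = 1 := by rw [← star_mul, hGH, star_one]
  have hZG : Z * star G = G * Z := mul_eq_mul_of_mul_eq_mul_of_mul_eq_one hGH hstar hHZ
  calc star (Z * G) = star G * Z := by rw [star_mul, hZ.star_eq]
    _ = Z * (Z * star G) * Z := by rw [← mul_assoc, hZZ, one_mul]
    _ = Z * G * (Z * Z) := by rw [hZG]; simp only [mul_assoc]
    _ = Z * G := by rw [hZZ, mul_one]

theorem IsSelfAdjoint.inner_apply_comm {E : Type*} [NormedAddCommGroup E]
    [InnerProductSpace ℝ E] [CompleteSpace E] {T : E →L[ℝ] E} (hT : IsSelfAdjoint T) (a b : E) :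
    inner ℝ a (T b) = inner ℝ b (T a) :=
  (real_inner_comm (T b) a).trans (hT.isSymmetric b a)

theorem connectivity_measure_symmetric_general
    {E : Type*} [NormedAddCommGroup E] [InnerProductSpace ℝ E] [CompleteSpace E]
    (H G Z : E →L[ℝ] E)
    (hGH : G ∘L H = 1)
    (hZZ : Z ∘L Z = 1) (hZsa : adjoint Z = Z)
    (hsym : H ∘L Z = Z ∘L adjoint H) :
    IsSelfAdjoint (Z ∘L G) ∧
      ∀ a b : E, -(inner ℝ a ((Z ∘L G) b) : ℝ) = -(inner ℝ b ((Z ∘L G) a) : ℝ) := by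
  have hsa : IsSelfAdjoint (Z ∘L G) :=
    IsSelfAdjoint.mul_of_mul_eq_mul_star hGH hZZ (isSelfAdjoint_iff'.mpr hZsa) hsym
  exact ⟨hsa, fun a b => congrArg Neg.neg (hsa.inner_apply_comm a b)⟩

/-- **Symmetry of the connectivity measure.**
Let `E` be a real Hilbert space, `H : E → E` an invertible continuous linear operator
(with inverse `G`), and `Z : E → E` a continuous linear operator with `Z ∘ Z = Id`,
`Z† = Z` and `H ∘ Z = Z ∘ H†`. Then `Z ∘ H⁻¹` is self-adjoint, and consequently the
connectivity measure `c(a,b) = -⟨a, Z H⁻¹ b⟩` is symmetric: `c(a,b) = c(b,a)`. -/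
theorem connectivity_measure_symmetric
    {E : Type*} [NormedAddCommGroup E] [InnerProductSpace ℝ E] [CompleteSpace E]
    (H G Z : E →L[ℝ] E)
    (hHG : H ∘L G = 1) (hGH : G ∘L H = 1)
    (hZZ : Z ∘L Z = 1) (hZsa : adjoint Z = Z)
    (hsym : H ∘L Z = Z ∘L adjoint H) :
    IsSelfAdjoint (Z ∘L G) ∧
      ∀ a b : E, -(inner ℝ a ((Z ∘L G) b) : ℝ) = -(inner ℝ b ((Z ∘L G) a) : ℝ) :=
  connectivity_measure_symmetric_general H G Z hGH hZZ hZsa hsym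
end
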